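/- arXiv:math/0408212 — 2 statements merged into one kernel-verified Lean document; each statement's English description precedes it below -/
import Mathlib

section
/- Assume r_0 >= 1 (phi has no linear term, the finite-characteristic inseparable case). Let x be a nonzero element of L with v(x) >= N_v. Then v(phi^n(x)) >= v(x) for every n >= 1 (with the convention v(0) = +infinity); consequently the sequence min(0, v(phi^n(x)))/q^(r*n) converges to 0, i.e. the local height of x vanishes. (Lemma 2.11 of the paper.) -/
/-!
The condition `v x ≥ N_v` says exactly that `v (a i) + q^i v x ≥ v x` for every `i ≥ 1` with
`a i ≠ 0`. So as soon as `v y ≥ v x`, every monomial `a i y^(q^i)` of `φ y` has valuation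
`≥ v x`, i.e. `φ` maps `{y | v x ≤ v y}` into itself. Along the orbit of `x`, `min 0 (v (φⁿ x))`
is therefore trapped between `min 0 (v x)` and `0`, and dividing by `q^(rn)` sends it to `0`.
-/

open Filter Topology Finset

universe u

section Drinfeld

variable {L : Type u} [Field L] {k : Type*} [Field k]

/-- The integer value of the valuation `v` at `y` (junk value `0` at `y = 0`). -/
noncomputable def vz (v : L → WithTop ℤ) (y : L) : ℤ := WithTop.untopD 0 (v y)

/-- `v : L → ℤ ∪ {∞}` is a normalized discrete valuation: `v 0 = ∞`, `v` is finite and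
surjective onto `ℤ` on nonzero elements, `v (x * y) = v x + v y` and
`v (x + y) ≥ min (v x) (v y)`. -/
structure IsDVal (v : L → WithTop ℤ) : Prop where
  map_zero : v 0 = ⊤
  ne_top : ∀ x : L, x ≠ 0 → v x ≠ ⊤
  map_mul : ∀ x y : L, v (x * y) = v x + v y
  add_min : ∀ x y : L, min (v x) (v y) ≤ v (x + y)
  surj : ∀ n : ℤ, ∃ x : L, v x = (n : WithTop ℤ)

/-- `res : L → k` restricted to the valuation ring of `v` is the quotient map onto the
residue field `k` of `v`. -/
structure IsResidue (v : L → WithTop ℤ) (res : L → k) : Prop where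
  map_one : res 1 = 1
  map_add : ∀ x y : L, 0 ≤ v x → 0 ≤ v y → res (x + y) = res x + res y
  map_mul : ∀ x y : L, 0 ≤ v x → 0 ≤ v y → res (x * y) = res x * res y
  eq_zero_iff : ∀ x : L, 0 ≤ v x → (res x = 0 ↔ 0 < v x)
  surj : ∀ c : k, ∃ x : L, 0 ≤ v x ∧ res x = c

/-- The angular component of `y` at `v`, with respect to the uniformizer `π` and the
residue map `res`: the residue of `y * π ^ (-v y)`. -/
noncomputable def ac (v : L → WithTop ℤ) (π : L) (res : L → k) (y : L) : k :=
  res (y * π ^ (-(vz v y)))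

/-- The `F_q`-linear map `φ(x) = ∑_{i=r₀}^{r} a i * x^(q^i)`. -/
noncomputable def phiMap (q r₀ r : ℕ) (a : ℕ → L) (x : L) : L :=
  ∑ i ∈ Finset.Icc r₀ r, a i * x ^ q ^ i

/-- The set `P_v ⊆ ℚ` of possible exceptional valuations:
`(v(a i) - v(a j))/(q^j - q^i)` for `r₀ ≤ i < j ≤ r` with `a i ≠ 0 ≠ a j`, together with `0`. -/
def Pset (q : ℕ) (v : L → WithTop ℤ) (r₀ r : ℕ) (a : ℕ → L) : Set ℚ :=
  {0} ∪ {α : ℚ | ∃ i j : ℕ, r₀ ≤ i ∧ i < j ∧ j ≤ r ∧ a i ≠ 0 ∧ a j ≠ 0 ∧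
      α = ((vz v (a i) : ℚ) - (vz v (a j) : ℚ)) / ((q : ℚ) ^ j - (q : ℚ) ^ i)}

/-- The set `J(α)` of indices where `v(a i) + q^i * α` attains its minimum. -/
def Jset (q : ℕ) (v : L → WithTop ℤ) (r₀ r : ℕ) (a : ℕ → L) (α : ℚ) : Set ℕ :=
  {i : ℕ | r₀ ≤ i ∧ i ≤ r ∧ a i ≠ 0 ∧
    ∀ j : ℕ, r₀ ≤ j → j ≤ r → a j ≠ 0 →
      (vz v (a i) : ℚ) + (q : ℚ) ^ i * α ≤ (vz v (a j) : ℚ) + (q : ℚ) ^ j * α}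

open scoped Classical in
/-- The set `R_v(α) ⊆ k_v`: `1` together with the nonzero roots of
`∑_{i ∈ J(α)} ac(a i) * X^(q^i)`. -/
noncomputable def Rset (q : ℕ) (v : L → WithTop ℤ) (π : L) (res : L → k)
    (r₀ r : ℕ) (a : ℕ → L) (α : ℚ) : Set k :=
  {1} ∪ {γ : k | γ ≠ 0 ∧
    ∑ i ∈ Finset.Icc r₀ r,
      (if i ∈ Jset q v r₀ r a α then ac v π res (a i) * γ ^ q ^ i else 0) = 0}

/-- The exceptional condition `Exc(y)`: `v y ∈ P_v` and `ac y ∈ R_v(v y)`. -/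
def Exc (q : ℕ) (v : L → WithTop ℤ) (π : L) (res : L → k)
    (r₀ r : ℕ) (a : ℕ → L) (y : L) : Prop :=
  ((vz v y : ℚ) ∈ Pset q v r₀ r a) ∧ ac v π res y ∈ Rset q v π res r₀ r a ((vz v y : ℚ))

/-- The sequence `min(0, v(φⁿ x)) / q^(r n)` whose limit is minus the local height of `x`. -/
noncomputable def locSeq (q r : ℕ) (v : L → WithTop ℤ) (φ : L → L) (x : L) (n : ℕ) : ℝ :=
  ((min 0 (vz v (φ^[n] x)) : ℤ) : ℝ) / (q : ℝ) ^ (r * n)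

namespace IsDVal

variable {v : L → WithTop ℤ}

lemma map_one (hv : IsDVal v) : v 1 = 0 := by
  obtain ⟨m, hm⟩ := WithTop.ne_top_iff_exists.1 (hv.ne_top 1 one_ne_zero)
  have h := hv.map_mul 1 1
  rw [one_mul, ← hm, ← WithTop.coe_add, WithTop.coe_eq_coe] at h
  rw [← hm, WithTop.coe_eq_zero]
  omega

def toAddValuation (hv : IsDVal v) : AddValuation L (WithTop ℤ) :=
  AddValuation.of v hv.map_zero hv.map_one hv.add_min hv.map_mul

@[simp]
lemma toAddValuation_apply (hv : IsDVal v) (y : L) : hv.toAddValuation y = v y := rfl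

end IsDVal

lemma WithTop.le_add_nsmul_of_neg_div_le {b w : WithTop ℤ} {Q : ℕ} (hQ : 1 < Q)
    (h : -((b.untopD 0 : ℤ) : ℚ) / ((Q : ℚ) - 1) ≤ ((w.untopD 0 : ℤ) : ℚ)) : w ≤ b + Q • w := by
  induction b with
  | top => simp
  | coe b =>
    induction w with
    | top => rw [← Nat.succ_pred_eq_of_pos (by omega : 0 < Q), succ_nsmul]; simp
    | coe m =>
      have hQ' : (0 : ℚ) < Q - 1 := by
        rw [sub_pos]; exact_mod_cast hQ
      rw [WithTop.untopD_coe, WithTop.untopD_coe, div_le_iff₀ hQ'] at h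
      have hZ : -b ≤ m * ((Q : ℤ) - 1) := by exact_mod_cast h
      rw [← WithTop.coe_nsmul, ← WithTop.coe_add, WithTop.coe_le_coe, nsmul_eq_mul]
      linarith

lemma min_zero_untopD_mono {w w' : WithTop ℤ} (h : w ≤ w') :
    min 0 (w.untopD 0) ≤ min 0 (w'.untopD 0) := by
  induction w' with
  | top => simp
  | coe m' =>
    induction w with
    | top => simp at h
    | coe m => simpa only [WithTop.untopD_coe] using min_le_min_left 0 (WithTop.coe_le_coe.1 h)

lemma tendsto_div_pow_atTop_of_abs_le {f : ℕ → ℝ} {C Q : ℝ} (hf : ∀ n, |f n| ≤ C)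
    (hQ : 1 < Q) : Tendsto (fun n => f n / Q ^ n) atTop (𝓝 0) := by
  have hgeom : Tendsto (fun n => C * (Q⁻¹) ^ n) atTop (𝓝 0) := by
    simpa using ((tendsto_pow_atTop_nhds_zero_of_lt_one (by positivity)
      (inv_lt_one_of_one_lt₀ hQ)).const_mul C)
  refine squeeze_zero_norm (fun n => ?_) hgeom
  rw [Real.norm_eq_abs, abs_div, abs_of_pos (by positivity : 0 < Q ^ n), inv_pow,
    ← div_eq_mul_inv]
  exact div_le_div_of_nonneg_right (hf n) (by positivity)

lemma phiMap_mapsTo_setOf_le_val {v : L → WithTop ℤ} (hv : IsDVal v) {q r₀ r : ℕ} {a : ℕ → L}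
    {x : L} (hq : 1 < q) (hr₀ : 1 ≤ r₀)
    (hN : ∀ i ∈ Finset.Icc r₀ r, a i ≠ 0 →
      -(vz v (a i) : ℚ) / ((q : ℚ) ^ i - 1) ≤ (vz v x : ℚ)) :
    Set.MapsTo (phiMap q r₀ r a) {y | v x ≤ v y} {y | v x ≤ v y} := by
  intro y (hy : v x ≤ v y)
  refine hv.toAddValuation.map_le_sum fun i hi => ?_
  rcases eq_or_ne (a i) 0 with hai | hai
  · simp [hai]
  have hqi : 1 < q ^ i := Nat.one_lt_pow (by grind) hq
  calc v x ≤ v (a i) + q ^ i • v x :=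
        WithTop.le_add_nsmul_of_neg_div_le hqi (by exact_mod_cast hN i hi hai)
    _ ≤ v (a i) + q ^ i • v y := by gcongr
    _ = hv.toAddValuation (a i * y ^ q ^ i) := by simp [AddValuation.map_pow]

theorem statement7_general
    (p q : ℕ) (hp : p.Prime) (hq : ∃ s : ℕ, 0 < s ∧ q = p ^ s)
    (v : L → WithTop ℤ) (hv : IsDVal v)
    (r₀ r : ℕ) (hr1 : 1 ≤ r) (hr₀1 : 1 ≤ r₀)
    (a : ℕ → L)
    (x : L)
    (hN : ∀ i ∈ Finset.Icc r₀ r, a i ≠ 0 →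
      -(vz v (a i) : ℚ) / ((q : ℚ) ^ i - 1) ≤ (vz v x : ℚ)) :
    (∀ n : ℕ, 1 ≤ n → v x ≤ v ((phiMap q r₀ r a)^[n] x)) ∧
    Filter.Tendsto (locSeq q r v (phiMap q r₀ r a) x) Filter.atTop (nhds (0 : ℝ)) := by
  obtain ⟨s, hs, rfl⟩ := hq
  have hq : 1 < p ^ s := Nat.one_lt_pow hs.ne' hp.one_lt
  have hle : ∀ n, v x ≤ v ((phiMap (p ^ s) r₀ r a)^[n] x) := fun n =>
    (phiMap_mapsTo_setOf_le_val hv hq hr₀1 hN).iterate n (le_refl (v x))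
  refine ⟨fun n _ => hle n, ?_⟩
  have hbound : ∀ n, |((min 0 (vz v ((phiMap (p ^ s) r₀ r a)^[n] x)) : ℤ) : ℝ)|
      ≤ |((min 0 (vz v x) : ℤ) : ℝ)| := fun n => by
    exact_mod_cast abs_le_abs_of_nonpos (min_le_left _ _) (min_zero_untopD_mono (hle n))
  have hqr : (1 : ℝ) < ((p ^ s : ℕ) : ℝ) ^ r := one_lt_pow₀ (by exact_mod_cast hq) (by omega)
  refine (tendsto_div_pow_atTop_of_abs_le hbound hqr).congr fun n => ?_
  rw [locSeq, pow_mul]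

/-- Lemma 2.11: if `r₀ ≥ 1` and `v(x) ≥ N_v`, then `v(φⁿ(x)) ≥ v(x)` for all `n ≥ 1` and the
local-height sequence tends to `0`. -/
theorem statement7
    (p q : ℕ) (hp : p.Prime) (hq : ∃ s : ℕ, 0 < s ∧ q = p ^ s)
    [CharP L p] (F : Subfield L) (hF : Nat.card F = q)
    (v : L → WithTop ℤ) (hv : IsDVal v)
    (r₀ r : ℕ) (hr1 : 1 ≤ r) (hr₀r : r₀ ≤ r) (hr₀1 : 1 ≤ r₀)
    (a : ℕ → L) (har₀ : a r₀ ≠ 0) (har : a r = 1)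
    (x : L) (hx : x ≠ 0)
    (hN : ∀ i ∈ Finset.Icc r₀ r, a i ≠ 0 →
      -(vz v (a i) : ℚ) / ((q : ℚ) ^ i - 1) ≤ (vz v x : ℚ)) :
    (∀ n : ℕ, 1 ≤ n → v x ≤ v ((phiMap q r₀ r a)^[n] x)) ∧
    Filter.Tendsto (locSeq q r v (phiMap q r₀ r a) x) Filter.atTop (nhds (0 : ℝ)) :=
  statement7_general p q hp hq v hv r₀ r hr1 hr₀1 a x hN

end Drinfeld
end

section
/- Assume r_0 >= 1. Let x be a nonzero element of L with v(x) < N_v such that Exc(x) fails. Then there exists an index i_0 with r_0 <= i_0 <= r and a_{i_0} != 0 such that v(phi(x)) = v(a_{i_0}) + q^(i_0) * v(x), this value is strictly less than v(x), and moreover v(x) < -v(a_{i_0})/(q^(i_0) - 1). In particular phi(x) != 0 and v(phi(x)) < v(x). (Lemma 2.12 of the paper.) -/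
/-! Let `m` be the least of the values `v(a i) + q^i v(x)`, attained exactly on `J(v x)`.
All terms of `φ(x) π^(-m)` are integral, and its residue is `∑_{i ∈ J(v x)} ac(a i) ac(x)^(q^i)`.
Were this zero, `ac x` would lie in `R_v(v x)`, so `Exc x` failing forces `v x ∉ P_v`; but two
minimizing indices would put `v x` in `P_v`, so the sum is a single nonzero term. Hence
`v(φ x) = m`, and `v(x) < N_v` gives an index `i` with `m ≤ v(a i) + q^i v(x) < v(x)`. -/

open Filter Topology Finset

universe u

section Drinfeld

variable {L : Type u} [Field L] {k : Type*} [Field k]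

theorem lt_neg_div_sub_one_iff {K : Type*} [Field K] [LinearOrder K] [IsStrictOrderedRing K]
    {A B x : K} (hB : 1 < B) : x < -A / (B - 1) ↔ A + B * x < x := by
  rw [lt_div_iff₀ (sub_pos.2 hB)]
  constructor <;> intro h <;> linarith

namespace IsDVal

variable {v : L → WithTop ℤ}

theorem coe_vz (hv : IsDVal v) {y : L} (hy : y ≠ 0) : (vz v y : WithTop ℤ) = v y := by
  obtain ⟨n, hn⟩ := WithTop.ne_top_iff_exists.mp (hv.ne_top y hy)
  simp [vz, ← hn]

theorem vz_mul (hv : IsDVal v) {y z : L} (hy : y ≠ 0) (hz : z ≠ 0) :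
    vz v (y * z) = vz v y + vz v z := by
  have h := hv.map_mul y z
  rw [← hv.coe_vz hy, ← hv.coe_vz hz, ← hv.coe_vz (mul_ne_zero hy hz)] at h
  exact_mod_cast h

theorem vz_one (hv : IsDVal v) : vz v (1 : L) = 0 := by
  have h := hv.vz_mul (one_ne_zero (α := L)) one_ne_zero
  rw [mul_one] at h
  omega

theorem vz_pow (hv : IsDVal v) {y : L} (hy : y ≠ 0) (n : ℕ) : vz v (y ^ n) = n * vz v y := by
  induction n with
  | zero => simp [hv.vz_one]
  | succ n ih => rw [pow_succ, hv.vz_mul (pow_ne_zero n hy) hy, ih]; push_cast; ring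

theorem vz_inv (hv : IsDVal v) {y : L} (hy : y ≠ 0) : vz v y⁻¹ = -vz v y := by
  have h := hv.vz_mul hy (inv_ne_zero hy)
  rw [mul_inv_cancel₀ hy, hv.vz_one] at h
  omega

theorem vz_zpow (hv : IsDVal v) {y : L} (hy : y ≠ 0) (n : ℤ) : vz v (y ^ n) = n * vz v y := by
  obtain ⟨m, rfl | rfl⟩ := Int.eq_nat_or_neg n
  · rw [zpow_natCast, hv.vz_pow hy]
  · rw [zpow_neg, zpow_natCast, hv.vz_inv (pow_ne_zero m hy), hv.vz_pow hy]
    ring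

theorem le_map_sum (hv : IsDVal v) {ι : Type*} {s : Finset ι} {t : ι → L} {m : WithTop ℤ}
    (h : ∀ i ∈ s, m ≤ v (t i)) : m ≤ v (∑ i ∈ s, t i) :=
  Finset.sum_induction t (m ≤ v ·)
    (fun y z hy hz => (le_min hy hz).trans (hv.add_min y z)) (hv.map_zero ▸ le_top) h

theorem v_mul_pow (hv : IsDVal v) {y x : L} (hy : y ≠ 0) (hx : x ≠ 0) (n : ℕ) :
    v (y * x ^ n) = ((vz v y + n * vz v x : ℤ) : WithTop ℤ) := by
  rw [← hv.coe_vz (mul_ne_zero hy (pow_ne_zero n hx)), hv.vz_mul hy (pow_ne_zero n hx),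
    hv.vz_pow hx]

variable {π : L}

theorem ne_zero_of_v_eq_one (hv : IsDVal v) (hπ : v π = 1) : π ≠ 0 := by
  rintro rfl
  simp [hv.map_zero] at hπ

theorem v_mul_zpow (hv : IsDVal v) (hπ : v π = 1) (y : L) (n : ℤ) :
    v (y * π ^ n) = v y + n := by
  have hπ0 := hv.ne_zero_of_v_eq_one hπ
  have hvπ : vz v π = 1 := by simp [vz, hπ]
  rw [hv.map_mul, ← hv.coe_vz (zpow_ne_zero n hπ0), hv.vz_zpow hπ0, hvπ, mul_one]

theorem nonneg_v_mul_zpow_neg (hv : IsDVal v) (hπ : v π = 1) {y : L} {m : ℤ}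
    (hm : (m : WithTop ℤ) ≤ v y) : 0 ≤ v (y * π ^ (-m)) := by
  rw [hv.v_mul_zpow hπ]
  cases hvy : v y with
  | top => simp
  | coe n =>
    rw [hvy] at hm
    norm_cast at hm ⊢
    omega

theorem v_mul_zpow_neg_vz (hv : IsDVal v) (hπ : v π = 1) {y : L} (hy : y ≠ 0) :
    v (y * π ^ (-vz v y)) = 0 := by
  rw [hv.v_mul_zpow hπ, ← hv.coe_vz hy]
  norm_cast
  omega

end IsDVal

namespace IsResidue

variable {v : L → WithTop ℤ} {res : L → k}

theorem map_zero (hv : IsDVal v) (hres : IsResidue v res) : res 0 = 0 := by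
  have h := hres.map_add 0 0 (by simp [hv.map_zero]) (by simp [hv.map_zero])
  rw [add_zero] at h
  linear_combination -h

theorem map_sum (hv : IsDVal v) (hres : IsResidue v res) {ι : Type*} {s : Finset ι}
    {t : ι → L} (h : ∀ i ∈ s, 0 ≤ v (t i)) : res (∑ i ∈ s, t i) = ∑ i ∈ s, res (t i) := by
  classical
  induction s using Finset.induction_on with
  | empty => simpa using hres.map_zero hv
  | insert i s hi ih =>
    rw [Finset.forall_mem_insert] at h
    rw [Finset.sum_insert hi, Finset.sum_insert hi,
      hres.map_add _ _ h.1 (hv.le_map_sum h.2), ih h.2]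

variable {π : L}

theorem ac_ne_zero (hv : IsDVal v) (hres : IsResidue v res) (hπ : v π = 1) {y : L}
    (hy : y ≠ 0) : ac v π res y ≠ 0 := by
  rw [ac, Ne, hres.eq_zero_iff _ (hv.v_mul_zpow_neg_vz hπ hy).ge, hv.v_mul_zpow_neg_vz hπ hy]
  exact lt_irrefl 0

theorem ac_mul (hv : IsDVal v) (hres : IsResidue v res) (hπ : v π = 1) (y z : L) :
    ac v π res (y * z) = ac v π res y * ac v π res z := by
  rcases eq_or_ne y 0 with rfl | hy
  · simp [ac, hres.map_zero hv]
  rcases eq_or_ne z 0 with rfl | hz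
  · simp [ac, hres.map_zero hv]
  have hsplit : y * z * π ^ (-vz v (y * z)) = y * π ^ (-vz v y) * (z * π ^ (-vz v z)) := by
    rw [hv.vz_mul hy hz, neg_add, zpow_add₀ (hv.ne_zero_of_v_eq_one hπ)]
    ring
  rw [ac, hsplit, ac, ac]
  exact hres.map_mul _ _ (hv.v_mul_zpow_neg_vz hπ hy).ge (hv.v_mul_zpow_neg_vz hπ hz).ge

theorem ac_pow (hv : IsDVal v) (hres : IsResidue v res) (hπ : v π = 1) (y : L) (n : ℕ) :
    ac v π res (y ^ n) = ac v π res y ^ n := by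
  induction n with
  | zero => simp [ac, hv.vz_one, hres.map_one]
  | succ n ih => rw [pow_succ, ac_mul hv hres hπ, ih, pow_succ]

theorem res_mul_zpow_neg (hv : IsDVal v) (hres : IsResidue v res) (hπ : v π = 1) {y : L}
    {m : ℤ} (hm : (m : WithTop ℤ) ≤ v y) :
    res (y * π ^ (-m)) = if v y = m then ac v π res y else 0 := by
  rcases eq_or_ne y 0 with rfl | hy
  · simp [hv.map_zero, hres.map_zero hv]
  rw [← hv.coe_vz hy] at hm ⊢
  split_ifs with h
  · rw [ac, WithTop.coe_inj.mp h]
  · refine (hres.eq_zero_iff _ (hv.nonneg_v_mul_zpow_neg hπ (hv.coe_vz hy ▸ hm))).mpr ?_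
    rw [hv.v_mul_zpow hπ, ← hv.coe_vz hy]
    norm_cast at hm h ⊢
    omega

theorem v_sum_eq_of_sum_ac_ne_zero (hv : IsDVal v) (hres : IsResidue v res) (hπ : v π = 1)
    {ι : Type*} {s : Finset ι} {t : ι → L} {m : ℤ}
    (hm : ∀ i ∈ s, (m : WithTop ℤ) ≤ v (t i))
    (hac : ∑ i ∈ s, (if v (t i) = m then ac v π res (t i) else 0) ≠ 0) :
    v (∑ i ∈ s, t i) = m := by
  have h := hres.res_mul_zpow_neg hv hπ (hv.le_map_sum hm)
  rw [Finset.sum_mul, hres.map_sum hv fun i hi => hv.nonneg_v_mul_zpow_neg hπ (hm i hi),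
    Finset.sum_congr rfl fun i hi => hres.res_mul_zpow_neg hv hπ (hm i hi)] at h
  by_contra hne
  rw [if_neg hne] at h
  exact hac h

end IsResidue

section Jset

variable {q r₀ r i₀ : ℕ} {v : L → WithTop ℤ} {a : ℕ → L} {α : ℚ}

theorem exists_mem_Jset (h : ∃ i ∈ Icc r₀ r, a i ≠ 0) (α : ℚ) :
    ∃ i₀, i₀ ∈ Jset q v r₀ r a α := by
  classical
  obtain ⟨i₀, hi₀, hmin⟩ := ((Icc r₀ r).filter (a · ≠ 0)).exists_min_image
    (fun i => (vz v (a i) : ℚ) + (q : ℚ) ^ i * α) (by simpa [Finset.Nonempty] using h)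
  simp only [mem_filter, mem_Icc] at hi₀ hmin
  exact ⟨i₀, hi₀.1.1, hi₀.1.2, hi₀.2, fun j hj₁ hj₂ hj => hmin j ⟨⟨hj₁, hj₂⟩, hj⟩⟩

theorem mem_Jset_iff (hi₀ : i₀ ∈ Jset q v r₀ r a α) {i : ℕ} (hi : r₀ ≤ i ∧ i ≤ r)
    (ha : a i ≠ 0) :
    i ∈ Jset q v r₀ r a α ↔
      (vz v (a i) : ℚ) + (q : ℚ) ^ i * α = (vz v (a i₀) : ℚ) + (q : ℚ) ^ i₀ * α := by
  refine ⟨fun hi' => le_antisymm (hi'.2.2.2 i₀ hi₀.1 hi₀.2.1 hi₀.2.2.1)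
    (hi₀.2.2.2 i hi.1 hi.2 ha), fun h => ⟨hi.1, hi.2, ha, fun j hj₁ hj₂ hj => ?_⟩⟩
  rw [h]
  exact hi₀.2.2.2 j hj₁ hj₂ hj

-- Two distinct minimizing indices `i < j` force `α = (v(a i) - v(a j)) / (q^j - q^i)`.
theorem Jset_subsingleton (hq : 1 < q) (hα : α ∉ Pset q v r₀ r a) :
    (Jset q v r₀ r a α).Subsingleton := by
  have key : ∀ i j, i ∈ Jset q v r₀ r a α → j ∈ Jset q v r₀ r a α → ¬ i < j := by
    intro i j hi hj hij
    have heq := (mem_Jset_iff hi ⟨hj.1, hj.2.1⟩ hj.2.2.1).1 hj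
    have hpow : (q : ℚ) ^ i < (q : ℚ) ^ j := pow_lt_pow_right₀ (by exact_mod_cast hq) hij
    refine hα (Or.inr ⟨i, j, hi.1, hij, hj.2.1, hi.2.2.1, hj.2.2.1, ?_⟩)
    rw [eq_div_iff (sub_ne_zero.2 hpow.ne')]
    linear_combination heq
  intro i hi j hj
  by_contra hne
  rcases lt_or_gt_of_ne hne with h | h
  exacts [key i j hi hj h, key j i hj hi h]

end Jset

section phiMap

variable {q r₀ r i₀ : ℕ} {v : L → WithTop ℤ} {π : L} {res : L → k} {a : ℕ → L} {x : L}

open scoped Classical in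
theorem sum_Jset_ac_ne_zero (hv : IsDVal v) (hres : IsResidue v res) (hπ : v π = 1)
    (hq : 1 < q) (hx : x ≠ 0) (hexc : ¬ Exc q v π res r₀ r a x)
    (hi₀ : i₀ ∈ Jset q v r₀ r a (vz v x)) :
    ∑ i ∈ Icc r₀ r, (if i ∈ Jset q v r₀ r a (vz v x) then
      ac v π res (a i) * ac v π res x ^ q ^ i else 0) ≠ 0 := by
  intro hS
  have hP : (vz v x : ℚ) ∉ Pset q v r₀ r a :=
    fun hP => hexc ⟨hP, Or.inr ⟨hres.ac_ne_zero hv hπ hx, hS⟩⟩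
  rw [Finset.sum_eq_single_of_mem i₀ (mem_Icc.2 ⟨hi₀.1, hi₀.2.1⟩)
    fun j _ hj => if_neg fun hjJ => hj (Jset_subsingleton hq hP hjJ hi₀), if_pos hi₀] at hS
  exact mul_ne_zero (hres.ac_ne_zero hv hπ hi₀.2.2.1)
    (pow_ne_zero _ (hres.ac_ne_zero hv hπ hx)) hS

open scoped Classical in
theorem v_phiMap_eq (hv : IsDVal v) (hres : IsResidue v res) (hπ : v π = 1) (hx : x ≠ 0)
    (hi₀ : i₀ ∈ Jset q v r₀ r a (vz v x))
    (hS : ∑ i ∈ Icc r₀ r, (if i ∈ Jset q v r₀ r a (vz v x) then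
      ac v π res (a i) * ac v π res x ^ q ^ i else 0) ≠ 0) :
    v (phiMap q r₀ r a x) = ((vz v (a i₀) + (q : ℤ) ^ i₀ * vz v x : ℤ) : WithTop ℤ) := by
  have hterm : ∀ i ∈ Icc r₀ r, a i ≠ 0 →
      v (a i * x ^ q ^ i) = ((vz v (a i) + (q : ℤ) ^ i * vz v x : ℤ) : WithTop ℤ) :=
    fun i _ ha => by rw [hv.v_mul_pow ha hx]; push_cast; rfl
  refine hres.v_sum_eq_of_sum_ac_ne_zero hv hπ (fun i hi => ?_)
    (ne_of_eq_of_ne (Finset.sum_congr rfl fun i hi => ?_) hS)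
  all_goals
    obtain ⟨hi₁, hi₂⟩ := mem_Icc.1 hi
    rcases eq_or_ne (a i) 0 with ha | ha
  · simp [ha, hv.map_zero]
  · rw [hterm i hi ha, WithTop.coe_le_coe, ← Int.cast_le (R := ℚ)]
    push_cast
    exact hi₀.2.2.2 i hi₁ hi₂ ha
  · rw [ha, zero_mul, hv.map_zero, if_neg WithTop.top_ne_coe, if_neg fun hJ => hJ.2.2.1 ha]
  · rw [hres.ac_mul hv hπ, hres.ac_pow hv hπ]
    refine if_congr ?_ rfl rfl
    rw [hterm i hi ha, WithTop.coe_inj, ← Int.cast_inj (α := ℚ), mem_Jset_iff hi₀ ⟨hi₁, hi₂⟩ ha]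
    push_cast
    rfl

end phiMap

theorem statement8_general
    (p q : ℕ) (hp : p.Prime) (hq : ∃ s : ℕ, 0 < s ∧ q = p ^ s)
    (v : L → WithTop ℤ) (hv : IsDVal v)
    (π : L) (hπ : v π = 1) (res : L → k) (hres : IsResidue v res)
    (r₀ r : ℕ) (hr₀1 : 1 ≤ r₀)
    (a : ℕ → L)
    (x : L) (hx : x ≠ 0)
    (hN : ∃ i ∈ Finset.Icc r₀ r, a i ≠ 0 ∧
      (vz v x : ℚ) < -(vz v (a i) : ℚ) / ((q : ℚ) ^ i - 1))
    (hexc : ¬ Exc q v π res r₀ r a x) :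
    ∃ i₀ ∈ Finset.Icc r₀ r, a i₀ ≠ 0 ∧
      phiMap q r₀ r a x ≠ 0 ∧
      v (phiMap q r₀ r a x) = ((vz v (a i₀) + (q : ℤ) ^ i₀ * vz v x : ℤ) : WithTop ℤ) ∧
      vz v (phiMap q r₀ r a x) < vz v x ∧
      (vz v x : ℚ) < -(vz v (a i₀) : ℚ) / ((q : ℚ) ^ i₀ - 1) := by
  have hq1 : 1 < q := by
    obtain ⟨s, hs, rfl⟩ := hq
    exact Nat.one_lt_pow hs.ne' hp.one_lt
  have hqpow : ∀ i, 1 ≤ i → (1 : ℚ) < (q : ℚ) ^ i :=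
    fun i hi => one_lt_pow₀ (by exact_mod_cast hq1) (by omega)
  obtain ⟨iN, hiN, haN, hxN⟩ := hN
  obtain ⟨hiN₁, hiN₂⟩ := mem_Icc.1 hiN
  obtain ⟨i₀, hi₀⟩ := exists_mem_Jset ⟨iN, hiN, haN⟩ (vz v x : ℚ)
  have hφ := v_phiMap_eq hv hres hπ hx hi₀ (sum_Jset_ac_ne_zero hv hres hπ hq1 hx hexc hi₀)
  have hlt : (vz v (a i₀) : ℚ) + (q : ℚ) ^ i₀ * vz v x < vz v x :=
    (hi₀.2.2.2 iN hiN₁ hiN₂ haN).trans_lt ((lt_neg_div_sub_one_iff (hqpow iN (by omega))).1 hxN)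
  refine ⟨i₀, mem_Icc.2 ⟨hi₀.1, hi₀.2.1⟩, hi₀.2.2.1, fun h => by
    rw [h, hv.map_zero] at hφ; exact WithTop.top_ne_coe hφ, hφ,
    ?_, (lt_neg_div_sub_one_iff (hqpow i₀ (by linarith [hi₀.1]))).2 hlt⟩
  rw [vz, hφ, WithTop.untopD_coe]
  exact_mod_cast hlt

/-- Lemma 2.12: if `r₀ ≥ 1`, `v(x) < N_v`, and `Exc(x)` fails, then there is an index `i₀`
with `v(φ(x)) = v(a i₀) + q^(i₀) v(x) < v(x)` and `v(x) < -v(a i₀)/(q^(i₀) - 1)`. -/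
theorem statement8
    (p q : ℕ) (hp : p.Prime) (hq : ∃ s : ℕ, 0 < s ∧ q = p ^ s)
    [CharP L p] (F : Subfield L) (hF : Nat.card F = q)
    (v : L → WithTop ℤ) (hv : IsDVal v)
    (π : L) (hπ : v π = 1) (res : L → k) (hres : IsResidue v res)
    (r₀ r : ℕ) (hr1 : 1 ≤ r) (hr₀r : r₀ ≤ r) (hr₀1 : 1 ≤ r₀)
    (a : ℕ → L) (har₀ : a r₀ ≠ 0) (har : a r = 1)
    (x : L) (hx : x ≠ 0)
    (hN : ∃ i ∈ Finset.Icc r₀ r, a i ≠ 0 ∧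
      (vz v x : ℚ) < -(vz v (a i) : ℚ) / ((q : ℚ) ^ i - 1))
    (hexc : ¬ Exc q v π res r₀ r a x) :
    ∃ i₀ ∈ Finset.Icc r₀ r, a i₀ ≠ 0 ∧
      phiMap q r₀ r a x ≠ 0 ∧
      v (phiMap q r₀ r a x) = ((vz v (a i₀) + (q : ℤ) ^ i₀ * vz v x : ℤ) : WithTop ℤ) ∧
      vz v (phiMap q r₀ r a x) < vz v x ∧
      (vz v x : ℚ) < -(vz v (a i₀) : ℚ) / ((q : ℚ) ^ i₀ - 1) :=
  statement8_general p q hp hq v hv π hπ res hres r₀ r hr₀1 a x hx hN hexc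

end Drinfeld
end
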